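/- arXiv:1902.08006 — 3 statements merged into one kernel-verified Lean document; each statement's English description precedes it below -/
import Mathlib

section
/- Let A and B be countable equivalence structures where [5:ω] denotes the structure with infinitely many equivalence classes of size 5 and no others, and [6:ω] likewise with size 6. Then there is a learner M (an arbitrary function from finite informant sequences to conjectures) that InfEx-learns both A and B up to isomorphism: on every informant for any ω-presentation of A or B, M converges to a correct isomorphism-type conjecture. -/
open Set

/-- An equivalence structure on ℕ. -/
structure EqStruct where
  rel : ℕ → ℕ → Prop
  equiv : Equivalence rel

namespace EqStruct

/-- Isomorphism of equivalence structures. -/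
def Isom (A B : EqStruct) : Prop :=
  ∃ f : ℕ → ℕ, Function.Bijective f ∧ ∀ x y, A.rel x y ↔ B.rel (f x) (f y)

/-- Embedding of equivalence structures. -/
def Embeds (A B : EqStruct) : Prop :=
  ∃ f : ℕ → ℕ, Function.Injective f ∧ ∀ x y, A.rel x y ↔ B.rel (f x) (f y)

/-- Bi-embeddability. -/
def Biembed (A B : EqStruct) : Prop := A.Embeds B ∧ B.Embeds A

/-- The equivalence class of `x`. -/
def classOf (A : EqStruct) (x : ℕ) : Set ℕ := {y | A.rel x y}

/-- The number of equivalence classes of size `k` (counted in `ℕ∞`). -/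
noncomputable def numClasses (A : EqStruct) (k : ℕ∞) : ℕ∞ :=
  {C : Set ℕ | (∃ x, C = A.classOf x) ∧ C.encard = k}.encard

/-- `A` finitely embeds into `B`: every finite substructure `A[s]` embeds into `B`. -/
def FinEmbeds (A B : EqStruct) : Prop :=
  ∀ s : ℕ, ∃ f : ℕ → ℕ, Set.InjOn f (Set.Iio s) ∧
    ∀ x < s, ∀ y < s, (A.rel x y ↔ B.rel (f x) (f y))

end EqStruct

/-- An informant for a structure: lists every pair, labelled correctly. -/
def IsInformant (A : EqStruct) (I : ℕ → (ℕ × ℕ) × Bool) : Prop :=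
  (∀ p : ℕ × ℕ, ∃ n, (I n).1 = p) ∧
  (∀ n, ((I n).2 = true ↔ A.rel (I n).1.1 (I n).1.2))

/-- A learner from informants: `none` is the `?` symbol. -/
abbrev Learner := List ((ℕ × ℕ) × Bool) → Option ℕ

/-- The initial segment `I[n]`. -/
def seg (I : ℕ → (ℕ × ℕ) × Bool) (n : ℕ) : List ((ℕ × ℕ) × Bool) :=
  (List.range n).map I

/-- `M` InfEx-learns `A` up to `sim`, with hypotheses indices into `Me`. -/
def InfExLearns (Me : ℕ → EqStruct) (sim : EqStruct → EqStruct → Prop)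
    (M : Learner) (A : EqStruct) : Prop :=
  ∀ B, B.Isom A → ∀ I, IsInformant B I →
    ∃ e, sim (Me e) B ∧ ∃ N, ∀ n ≥ N, M (seg I n) = some e

/-- `M` finitely learns `A` from informants up to `sim`. -/
def InfFinLearns (Me : ℕ → EqStruct) (sim : EqStruct → EqStruct → Prop)
    (M : Learner) (A : EqStruct) : Prop :=
  ∀ B, B.Isom A → ∀ I, IsInformant B I →
    ∃ e, sim (Me e) B ∧ (∃ n, M (seg I n) = some e) ∧
      ∀ n e', M (seg I n) = some e' → e' = e

/-- A text for a structure: enumerates exactly the related pairs (`none` is pause). -/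
def IsText (A : EqStruct) (T : ℕ → Option (ℕ × ℕ)) : Prop :=
  ∀ x y, A.rel x y ↔ ∃ n, T n = some (x, y)

/-- A learner from texts. -/
abbrev TxtLearner := List (Option (ℕ × ℕ)) → Option ℕ

/-- The initial segment `T[n]` of a text. -/
def tseg (T : ℕ → Option (ℕ × ℕ)) (n : ℕ) : List (Option (ℕ × ℕ)) :=
  (List.range n).map T

/-- `M` TxtEx-learns `A` up to `sim`. -/
def TxtExLearns (Me : ℕ → EqStruct) (sim : EqStruct → EqStruct → Prop)
    (M : TxtLearner) (A : EqStruct) : Prop :=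
  ∀ B, B.Isom A → ∀ T, IsText B T →
    ∃ e, sim (Me e) B ∧ ∃ N, ∀ n ≥ N, M (tseg T n) = some e

/-- `σ` describes a finite part of `A`: it is an initial segment of an informant for `A`. -/
def DescribesPart (A : EqStruct) (σ : List ((ℕ × ℕ) × Bool)) : Prop :=
  ∃ I, IsInformant A I ∧ σ = seg I σ.length

/-!
Guess `[6:ω]` exactly when the data seen so far shows six pairwise equivalent elements.
On a presentation of `[5:ω]` this never happens, since such a set lies in a single class.
On a presentation of `[6:ω]` every pair inside one class is eventually listed with label `1`,
so from some point on the guess is `[6:ω]` forever.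
-/

namespace EqStruct

theorem Isom.symm {A B : EqStruct} (h : A.Isom B) : B.Isom A := by
  obtain ⟨f, hf, hrel⟩ := h
  refine ⟨(Equiv.ofBijective f hf).symm, Equiv.bijective _, fun x y => ?_⟩
  rw [hrel, Equiv.ofBijective_apply_symm_apply f hf, Equiv.ofBijective_apply_symm_apply f hf]

theorem Isom.trans {A B C : EqStruct} (h₁ : A.Isom B) (h₂ : B.Isom C) : A.Isom C := by
  obtain ⟨f, hf, hrf⟩ := h₁
  obtain ⟨g, hg, hrg⟩ := h₂
  exact ⟨g ∘ f, hg.comp hf, fun x y => (hrf x y).trans (hrg (f x) (f y))⟩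

theorem Isom.exists_encard_classOf_eq {A B : EqStruct} (h : A.Isom B) (x : ℕ) :
    ∃ y, (B.classOf y).encard = (A.classOf x).encard := by
  obtain ⟨f, hf, hrel⟩ := h
  have himage : f '' A.classOf x = B.classOf (f x) := by
    ext z
    obtain ⟨y, rfl⟩ := hf.2 z
    simp only [mem_image, hf.1.eq_iff, exists_eq_right, classOf, mem_ofPred_eq, hrel]
  exact ⟨f x, himage ▸ hf.1.injOn.encard_image⟩

end EqStruct

theorem mem_seg {I : ℕ → (ℕ × ℕ) × Bool} {n : ℕ} {a : (ℕ × ℕ) × Bool} :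
    a ∈ seg I n ↔ ∃ k < n, I k = a := by
  simp [seg]

def CertifiesClique (σ : List ((ℕ × ℕ) × Bool)) (k : ℕ) : Prop :=
  ∃ s : Finset ℕ, s.card = k ∧ ∀ x ∈ s, ∀ y ∈ s, ((x, y), true) ∈ σ

namespace IsInformant

variable {C : EqStruct} {I : ℕ → (ℕ × ℕ) × Bool}

theorem rel_of_mem_seg (hI : IsInformant C I) {n x y : ℕ} (h : ((x, y), true) ∈ seg I n) :
    C.rel x y := by
  obtain ⟨k, -, hk⟩ := mem_seg.mp h
  simpa [hk] using hI.2 k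

theorem eventually_mem_seg (hI : IsInformant C I) {x y : ℕ} (hxy : C.rel x y) :
    ∀ᶠ n in Filter.atTop, ((x, y), true) ∈ seg I n := by
  obtain ⟨k, hk⟩ := hI.1 (x, y)
  have hlabel : (I k).2 = true := (hI.2 k).mpr (hk ▸ hxy)
  filter_upwards [Filter.eventually_gt_atTop k] with n hn
  exact mem_seg.mpr ⟨k, hn, Prod.ext hk hlabel⟩

theorem exists_le_encard_classOf (hI : IsInformant C I) {n k : ℕ}
    (h : CertifiesClique (seg I n) k) : ∃ x, (k : ℕ∞) ≤ (C.classOf x).encard := by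
  obtain ⟨s, rfl, hs⟩ := h
  rcases s.eq_empty_or_nonempty with rfl | ⟨x, hx⟩
  · exact ⟨0, by simp⟩
  refine ⟨x, ?_⟩
  rw [← Set.encard_coe_eq_coe_finsetCard]
  exact Set.encard_le_encard fun y hy => hI.rel_of_mem_seg (hs x hx y hy)

theorem eventually_certifiesClique (hI : IsInformant C I) {x k : ℕ}
    (hk : (k : ℕ∞) ≤ (C.classOf x).encard) :
    ∀ᶠ n in Filter.atTop, CertifiesClique (seg I n) k := by
  obtain ⟨t, htx, htk⟩ := Set.exists_subset_encard_eq hk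
  have ht : t.Finite := Set.finite_of_encard_eq_coe htk
  have hcard : ht.toFinset.card = k := by
    exact_mod_cast ht.encard_eq_coe_toFinset_card.symm.trans htk
  have hrel : ∀ y ∈ ht.toFinset, ∀ z ∈ ht.toFinset, C.rel y z := fun y hy z hz =>
    C.equiv.trans (C.equiv.symm (htx (ht.mem_toFinset.mp hy))) (htx (ht.mem_toFinset.mp hz))
  have hall : ∀ᶠ n in Filter.atTop, ∀ y ∈ ht.toFinset, ∀ z ∈ ht.toFinset,
      ((y, z), true) ∈ seg I n := by
    simp only [Filter.eventually_all_finset]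
    exact fun y hy z hz => hI.eventually_mem_seg (hrel y hy z hz)
  filter_upwards [hall] with n hn
  exact ⟨ht.toFinset, hcard, hn⟩

end IsInformant

open Classical in
noncomputable def cliqueLearner (k eSmall eLarge : ℕ) : Learner := fun σ =>
  if CertifiesClique σ k then some eLarge else some eSmall

theorem cliqueLearner_learns_of_encard_classOf_lt {Me : ℕ → EqStruct} {A : EqStruct} {k : ℕ}
    (hA : ∀ x, (A.classOf x).encard < k) {eSmall : ℕ} (he : (Me eSmall).Isom A)
    (eLarge : ℕ) : InfExLearns Me EqStruct.Isom (cliqueLearner k eSmall eLarge) A := by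
  intro C hCA I hI
  refine ⟨eSmall, he.trans hCA.symm, 0, fun n _ => if_neg fun hn => ?_⟩
  obtain ⟨x, hx⟩ := hI.exists_le_encard_classOf hn
  obtain ⟨y, hy⟩ := hCA.exists_encard_classOf_eq x
  exact (hx.trans_lt (hy ▸ hA y)).false

theorem cliqueLearner_learns_of_le_encard_classOf {Me : ℕ → EqStruct} {B : EqStruct} {k x : ℕ}
    (hB : (k : ℕ∞) ≤ (B.classOf x).encard) (eSmall : ℕ) {eLarge : ℕ} (he : (Me eLarge).Isom B) :
    InfExLearns Me EqStruct.Isom (cliqueLearner k eSmall eLarge) B := by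
  intro C hCB I hI
  obtain ⟨y, hy⟩ := hCB.symm.exists_encard_classOf_eq x
  refine ⟨eLarge, he.trans hCB.symm, Filter.eventually_atTop.mp ?_⟩
  filter_upwards [hI.eventually_certifiesClique (hy ▸ hB)] with n hn
  exact if_pos hn

/-- the family `{[5:ω], [6:ω]}` is InfEx-learnable up to isomorphism. -/
theorem stmt0 (Me : ℕ → EqStruct) (A B : EqStruct)
    (hA : ∀ x, (A.classOf x).encard = 5) (hB : ∀ x, (B.classOf x).encard = 6)
    (heA : ∃ e, (Me e).Isom A) (heB : ∃ e, (Me e).Isom B) :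
    ∃ M : Learner, InfExLearns Me EqStruct.Isom M A ∧ InfExLearns Me EqStruct.Isom M B := by
  obtain ⟨eA, heA⟩ := heA
  obtain ⟨eB, heB⟩ := heB
  refine ⟨cliqueLearner 6 eA eB, ?_, ?_⟩
  · exact cliqueLearner_learns_of_encard_classOf_lt (fun x => by rw [hA x]; norm_num) heA eB
  · exact cliqueLearner_learns_of_le_encard_classOf (x := 0) (hB 0).ge eA heB
end

section
/- The two-element family {[5:ω], [6:ω]} is not InfFin-learnable: there is no learner whose first non-? conjecture on every informant for every ω-presentation of either structure is a correct isomorphism-type conjecture. -/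
open Set

/-!
The learner, run on the canonical informant of `A`, commits to some conjecture `e` after `n`
steps. Since `A` embeds into `B`, relabelling `B` by a permutation of `ℕ` that extends this
embedding on `{0, …, n-1}` gives a copy `B'` of `B` that agrees with `A` below `n`, so those `n`
steps also begin an informant for `B'`. The learner then commits to `e` on `B'` as well, whence
`A ≅ Me e ≅ B'`, which is impossible as their classes have different sizes.
-/

theorem Set.Finite.exists_equiv_eqOn {α : Type*} [Countable α] [Infinite α] {s : Set α}
    (hs : s.Finite) {f : α → α} (hf : InjOn f s) : ∃ e : α ≃ α, EqOn e f s := by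
  classical
  have := hs.infinite_compl.to_subtype
  have := (hs.image f).infinite_compl.to_subtype
  obtain ⟨ds⟩ := nonempty_denumerable ↥sᶜ
  obtain ⟨dt⟩ := nonempty_denumerable ↥(f '' s)ᶜ
  obtain ⟨e, he⟩ := (Equiv.Set.compl (Equiv.Set.imageOfInjOn f s hf)).symm
    ((Denumerable.eqv _).trans (Denumerable.eqv _).symm)
  exact ⟨e, fun x hx => he ⟨x, hx⟩⟩

namespace EqStruct

def comap (B : EqStruct) (h : ℕ → ℕ) : EqStruct :=
  ⟨fun x y => B.rel (h x) (h y), B.equiv.comap h⟩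

def setoid (A : EqStruct) : Setoid ℕ := ⟨A.rel, A.equiv⟩

theorem mk_eq_mk_iff (A : EqStruct) {x y : ℕ} :
    Quotient.mk A.setoid x = Quotient.mk A.setoid y ↔ A.rel x y :=
  Quotient.eq

theorem rel_out_mk (A : EqStruct) (x : ℕ) : A.rel (Quotient.mk A.setoid x).out x :=
  A.mk_eq_mk_iff.1 (Quotient.out_eq _)

theorem Isom.refl (A : EqStruct) : A.Isom A :=
  ⟨id, Function.bijective_id, fun _ _ => Iff.rfl⟩

theorem comap_isom (B : EqStruct) {h : ℕ → ℕ} (hh : h.Bijective) : (B.comap h).Isom B :=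
  ⟨h, hh, fun _ _ => Iff.rfl⟩

theorem infinite_quotient_of_finite_classOf {B : EqStruct} (hB : ∀ y, (B.classOf y).Finite) :
    Infinite (Quotient B.setoid) := by
  refine ⟨fun _ => Set.infinite_univ (α := ℕ) ?_⟩
  refine Set.Finite.of_finite_fibers (Quotient.mk B.setoid) (Set.toFinite _) ?_
  rintro _ ⟨y, -, rfl⟩
  exact (hB y).subset fun z ⟨_, hz⟩ => B.equiv.symm (B.mk_eq_mk_iff.1 hz)

/-- `B` has infinitely many classes, so the classes of `A` can be sent injectively to classes of
`B`, each into one at least as large. -/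
theorem embeds_of_encard_classOf_le {A B : EqStruct} (hB : ∀ y, (B.classOf y).Finite)
    (hle : ∀ x y, (A.classOf x).encard ≤ (B.classOf y).encard) : A.Embeds B := by
  have := infinite_quotient_of_finite_classOf hB
  obtain ⟨c, hc⟩ := Countable.exists_injective_nat (Quotient A.setoid)
  set d := Infinite.natEmbedding (Quotient B.setoid) ∘ c
  have hd : d.Injective := (Infinite.natEmbedding _).injective.comp hc
  have hclass : ∀ q : Quotient A.setoid, ∃ g : ℕ → ℕ,
      A.classOf q.out ⊆ g ⁻¹' B.classOf (d q).out ∧ InjOn g (A.classOf q.out) := fun q =>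
    (encard_lt_top_iff.1 ((hle _ _).trans_lt (hB (d q).out).encard_lt_top)
      ).exists_injOn_of_encard_le (hle _ _)
  choose g hgmaps hginj using hclass
  set f : ℕ → ℕ := fun x => g (Quotient.mk A.setoid x) x
  have hmem : ∀ x, x ∈ A.classOf (Quotient.mk A.setoid x).out := A.rel_out_mk
  have hfmk : ∀ x, Quotient.mk B.setoid (f x) = d (Quotient.mk A.setoid x) := fun x => by
    rw [← Quotient.out_eq (d _)]
    exact B.mk_eq_mk_iff.2 (B.equiv.symm (hgmaps _ (hmem x)))
  have hrel : ∀ x y, A.rel x y ↔ B.rel (f x) (f y) := fun x y => by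
    rw [← A.mk_eq_mk_iff, ← B.mk_eq_mk_iff, hfmk, hfmk, hd.eq_iff]
  refine ⟨f, fun x y hxy => ?_, hrel⟩
  have hq := A.mk_eq_mk_iff.2 ((hrel x y).2 (hxy ▸ B.equiv.refl _))
  exact hginj _ (hmem x) (hq ▸ hmem y) (by simpa only [f, hq] using hxy)

theorem Embeds.finEmbeds {A B : EqStruct} (h : A.Embeds B) : A.FinEmbeds B := by
  obtain ⟨f, hf, hrel⟩ := h
  exact fun _ => ⟨f, hf.injOn, fun x _ y _ => hrel x y⟩

theorem FinEmbeds.exists_isom_rel_iff {A B : EqStruct} (h : A.FinEmbeds B) (n : ℕ) :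
    ∃ B' : EqStruct, B'.Isom B ∧ ∀ x < n, ∀ y < n, A.rel x y ↔ B'.rel x y := by
  obtain ⟨f, hf, hrel⟩ := h n
  obtain ⟨e, he⟩ := (finite_Iio n).exists_equiv_eqOn hf
  refine ⟨B.comap e, B.comap_isom e.bijective, fun x hx y hy => ?_⟩
  show _ ↔ B.rel (e x) (e y)
  rw [he hx, he hy, hrel x hx y hy]

noncomputable def canonInformant (A : EqStruct) (k : ℕ) : (ℕ × ℕ) × Bool :=
  open scoped Classical in (Nat.unpair k, decide (A.rel (Nat.unpair k).1 (Nat.unpair k).2))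

theorem isInformant_canonInformant (A : EqStruct) : IsInformant A A.canonInformant :=
  ⟨fun p => ⟨Nat.pair p.1 p.2, by simp [canonInformant]⟩, fun k => by simp [canonInformant]⟩

end EqStruct

theorem describesPart_seg {B : EqStruct} {I : ℕ → (ℕ × ℕ) × Bool} {n : ℕ}
    (hI : ∀ k < n, ((I k).2 = true ↔ B.rel (I k).1.1 (I k).1.2)) : DescribesPart B (seg I n) := by
  let J k := if k < n then I k else B.canonInformant (k - n)
  have hJ : IsInformant B J := by
    refine ⟨fun p => ?_, fun k => ?_⟩
    · obtain ⟨m, hm⟩ := B.isInformant_canonInformant.1 p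
      exact ⟨n + m, by simpa [J] using hm⟩
    · by_cases hk : k < n
      · simpa [J, hk] using hI k hk
      · simpa [J, hk] using B.isInformant_canonInformant.2 (k - n)
  refine ⟨J, hJ, ?_⟩
  simp only [seg, List.length_map, List.length_range]
  exact List.map_congr_left fun k hk => by simp [J, List.mem_range.1 hk]

theorem describesPart_seg_canonInformant {A B : EqStruct} {n : ℕ}
    (hAB : ∀ x < n, ∀ y < n, A.rel x y ↔ B.rel x y) :
    DescribesPart B (seg A.canonInformant n) := by
  refine describesPart_seg fun k hk => ?_
  rw [A.isInformant_canonInformant.2 k]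
  exact hAB _ ((Nat.unpair_left_le k).trans_lt hk) _ ((Nat.unpair_right_le k).trans_lt hk)

theorem InfFinLearns.sim_of_describesPart {Me : ℕ → EqStruct}
    {sim : EqStruct → EqStruct → Prop} {M : Learner} {B B' : EqStruct}
    (hM : InfFinLearns Me sim M B) (hB' : B'.Isom B) {σ : List ((ℕ × ℕ) × Bool)}
    (hσ : DescribesPart B' σ) {e : ℕ} (he : M σ = some e) : sim (Me e) B' := by
  obtain ⟨I, hI, hσ⟩ := hσ
  rw [hσ] at he
  obtain ⟨e', hsim, -, hunique⟩ := hM B' hB' I hI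
  exact hunique _ e he ▸ hsim

theorem not_infFinLearns_of_finEmbeds (Me : ℕ → EqStruct) {A B : EqStruct}
    (hAB : A.FinEmbeds B) (hnot : ¬ A.Isom B) (M : Learner) :
    ¬ (InfFinLearns Me EqStruct.Isom M A ∧ InfFinLearns Me EqStruct.Isom M B) := by
  rintro ⟨hMA, hMB⟩
  obtain ⟨e, hA, ⟨n, he⟩, -⟩ := hMA A (.refl A) A.canonInformant A.isInformant_canonInformant
  obtain ⟨B', hB'B, hagree⟩ := hAB.exists_isom_rel_iff n
  have hB' := hMB.sim_of_describesPart hB'B (describesPart_seg_canonInformant hagree) he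
  exact hnot ((hA.symm.trans hB').trans hB'B)

/-- the family `{[5:ω], [6:ω]}` is not InfFin-learnable. -/
theorem stmt1 (Me : ℕ → EqStruct) (A B : EqStruct)
    (hA : ∀ x, (A.classOf x).encard = 5) (hB : ∀ x, (B.classOf x).encard = 6) :
    ¬ ∃ M : Learner, InfFinLearns Me EqStruct.Isom M A ∧ InfFinLearns Me EqStruct.Isom M B := by
  rintro ⟨M, hM⟩
  have hemb : A.Embeds B := EqStruct.embeds_of_encard_classOf_le
    (fun y => finite_of_encard_eq_coe (hB y)) (fun x y => by rw [hA, hB]; norm_num)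
  refine not_infFinLearns_of_finEmbeds Me hemb.finEmbeds (fun hiso => ?_) M hM
  obtain ⟨y, hy⟩ := hiso.exists_encard_classOf_eq 0
  rw [hA, hB] at hy
  norm_num at hy
end

section
/- The family {[5:n, 1:ω] : n ∈ ω} ∪ {[5:ω]} — where [5:n,1:ω] has exactly n classes of size 5 plus infinitely many singleton classes, and [5:ω] has infinitely many classes of size 5 and nothing else — is not InfEx_≅-learnable. -/
/-!
Countable equivalence structures are classified up to isomorphism by how many classes of each
size they have. Suppose `M` learned every `[5:n, 1:ω]` and `[5:ω]`. Starting from the discrete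
structure, build stages, each a copy of some `[5:n, 1:ω]`: at step `k`, merge `k` (if it is still
a singleton) with four fresh singletons beyond everything the informant has shown so far, then wait
until `M`, reading the informant of the new stage, outputs a correct index. Consecutive stages agree
on ever longer initial segments, so they converge to a structure all of whose classes have size
`5`, a copy of `[5:ω]`, whose informant begins like that of every stage. Where `M` converges on
it, its guess is also a correct guess for a stage, which has singleton classes: a contradiction.
-/

open Set

universe u

lemma Set.Countable.nonempty_equiv_of_encard_eq {α β : Type u} {s : Set α} {t : Set β}
    (hs : s.Countable) (ht : t.Countable) (h : s.encard = t.encard) : Nonempty (s ≃ t) := by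
  rwa [← Cardinal.eq, ← Cardinal.toENat_eq_iff_of_le_aleph0
    (Cardinal.le_aleph0_iff_set_countable.mpr hs) (Cardinal.le_aleph0_iff_set_countable.mpr ht)]

lemma Equiv.exists_of_nonempty_fiberEquiv {α β γ : Type*} {f : α → γ} {g : β → γ}
    (h : ∀ c, Nonempty ({a // f a = c} ≃ {b // g b = c})) : ∃ e : α ≃ β, ∀ a, g (e a) = f a :=
  ⟨Equiv.ofFiberEquiv fun c => (h c).some, Equiv.ofFiberEquiv_map _⟩

namespace EqStruct

variable {X Y S : EqStruct} {x y : ℕ} {κ : ℕ∞} {P : Set ℕ}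

lemma mem_classOf : y ∈ X.classOf x ↔ X.rel x y := Iff.rfl

lemma mem_classOf_self (X : EqStruct) (x : ℕ) : x ∈ X.classOf x := X.equiv.refl x

lemma classOf_eq_classOf : X.classOf x = X.classOf y ↔ X.rel x y := by
  refine ⟨fun h => ?_, fun h => Set.ext fun z => ?_⟩
  · rw [← mem_classOf, h]
    exact X.mem_classOf_self y
  · exact ⟨X.equiv.trans (X.equiv.symm h), X.equiv.trans h⟩

lemma classOf_eq_iff_mem {C : Set ℕ} (hC : C ∈ range X.classOf) : X.classOf x = C ↔ x ∈ C := by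
  obtain ⟨z, rfl⟩ := hC
  exact classOf_eq_classOf.trans ⟨X.equiv.symm, X.equiv.symm⟩

def classesOfCardEquiv (X : EqStruct) (κ : ℕ∞) :
    {C : range X.classOf // (C : Set ℕ).encard = κ} ≃
      {C : Set ℕ | (∃ x, C = X.classOf x) ∧ C.encard = κ} :=
  (Equiv.subtypeSubtypeEquivSubtypeInter (· ∈ range X.classOf) (fun C => C.encard = κ)).trans <|
    Equiv.subtypeEquivRight fun C => and_congr_left' <| by
      simp only [mem_range, eq_comm]

lemma countable_setOf_classes (X : EqStruct) (κ : ℕ∞) :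
    {C : Set ℕ | (∃ x, C = X.classOf x) ∧ C.encard = κ}.Countable :=
  (countable_range X.classOf).mono <| by
    rintro C ⟨⟨x, rfl⟩, -⟩
    exact mem_range_self x

lemma rangeFactorization_classOf_eq_iff :
    rangeFactorization X.classOf x = rangeFactorization X.classOf y ↔ X.rel x y :=
  Subtype.ext_iff.trans classOf_eq_classOf

def fiberEquivClass (X : EqStruct) (C : range X.classOf) :
    {x // rangeFactorization X.classOf x = C} ≃ (C : Set ℕ) :=
  Equiv.subtypeEquivRight fun _ => Subtype.ext_iff.trans (classOf_eq_iff_mem C.2)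

theorem isom_of_numClasses_eq (h : ∀ κ, X.numClasses κ = Y.numClasses κ) : X.Isom Y := by
  obtain ⟨g, hg⟩ := Equiv.exists_of_nonempty_fiberEquiv
    (f := fun C : range X.classOf => (C : Set ℕ).encard)
    (g := fun C : range Y.classOf => (C : Set ℕ).encard) fun κ =>
      ((X.countable_setOf_classes κ).nonempty_equiv_of_encard_eq
        (Y.countable_setOf_classes κ) (h κ)).map fun e =>
          (X.classesOfCardEquiv κ).trans (e.trans (Y.classesOfCardEquiv κ).symm)
  obtain ⟨f, hf⟩ := Equiv.exists_of_nonempty_fiberEquiv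
    (f := fun x => g (rangeFactorization X.classOf x)) (g := rangeFactorization Y.classOf)
    fun D => by
      have hD : (g.symm D : Set ℕ).encard = (D : Set ℕ).encard := by
        rw [← hg, Equiv.apply_symm_apply]
      refine ((Set.to_countable _).nonempty_equiv_of_encard_eq (Set.to_countable _) hD).map
        fun e => ?_
      refine (Equiv.subtypeEquivRight fun x => ?_).trans <|
        (X.fiberEquivClass _).trans (e.trans (Y.fiberEquivClass D).symm)
      exact g.eq_symm_apply.symm
  refine ⟨f, f.bijective, fun x y => ?_⟩
  rw [← rangeFactorization_classOf_eq_iff, ← rangeFactorization_classOf_eq_iff, hf, hf,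
    g.apply_eq_iff_eq]

lemma Isom.numClasses_eq (h : X.Isom Y) (κ : ℕ∞) : X.numClasses κ = Y.numClasses κ := by
  obtain ⟨f, hf, hrel⟩ := h
  have himage (x : ℕ) : f '' X.classOf x = Y.classOf (f x) := by
    ext z
    obtain ⟨w, rfl⟩ := hf.surjective z
    simp only [mem_image, hf.injective.eq_iff, exists_eq_right, mem_classOf, hrel]
  have hclasses : {C | (∃ y, C = Y.classOf y) ∧ C.encard = κ} =
      image f '' {C | (∃ x, C = X.classOf x) ∧ C.encard = κ} := by
    ext C
    constructor
    · rintro ⟨⟨y, rfl⟩, hC⟩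
      obtain ⟨x, rfl⟩ := hf.surjective y
      refine ⟨X.classOf x, ⟨⟨x, rfl⟩, ?_⟩, himage x⟩
      rwa [← hf.injective.encard_image, himage]
    · rintro ⟨_, ⟨⟨x, rfl⟩, hC⟩, rfl⟩
      exact ⟨⟨f x, himage x⟩, by rwa [hf.injective.encard_image]⟩
  rw [numClasses, numClasses, hclasses, (image_injective.mpr hf.injective).encard_image]

lemma numClasses_eq_zero (h : ∀ x, (X.classOf x).encard ≠ κ) : X.numClasses κ = 0 := by
  rw [numClasses, encard_eq_zero, eq_empty_iff_forall_notMem]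
  rintro _ ⟨⟨x, rfl⟩, hx⟩
  exact h x hx

lemma numClasses_eq_top (hκ : κ ≠ ⊤) (h : ∀ x, (X.classOf x).encard = κ) :
    X.numClasses κ = ⊤ := by
  rw [numClasses, encard_eq_top_iff]
  intro hfin
  refine infinite_univ ((hfin.sUnion fun C hC => ?_).subset fun x _ => ?_)
  · obtain ⟨⟨x, rfl⟩, -⟩ := hC
    exact encard_ne_top_iff.mp (h x ▸ hκ)
  · exact mem_sUnion_of_mem (X.mem_classOf_self x) ⟨⟨x, rfl⟩, h x⟩

theorem isom_of_forall_encard_classOf_eq (hκ : κ ≠ ⊤) (hX : ∀ x, (X.classOf x).encard = κ)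
    (hY : ∀ y, (Y.classOf y).encard = κ) : X.Isom Y := by
  refine isom_of_numClasses_eq fun μ => ?_
  obtain rfl | hμ := eq_or_ne κ μ
  · rw [numClasses_eq_top hκ hX, numClasses_eq_top hκ hY]
  · rw [numClasses_eq_zero fun x => (hX x).trans_ne hμ,
      numClasses_eq_zero fun y => (hY y).trans_ne hμ]

/-- `Y ≅ [5:n, 1:ω]`, described by its character. -/
def IsFiveOneOmega (Y : EqStruct) (n : ℕ) : Prop :=
  (∀ x, (Y.classOf x).encard = 5 ∨ (Y.classOf x).encard = 1) ∧
    Y.numClasses 5 = (n : ℕ∞) ∧ Y.numClasses 1 = ⊤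

theorem isom_of_numClasses_five_one
    (hX : ∀ x, (X.classOf x).encard = 5 ∨ (X.classOf x).encard = 1)
    (hY : ∀ y, (Y.classOf y).encard = 5 ∨ (Y.classOf y).encard = 1)
    (h5 : X.numClasses 5 = Y.numClasses 5) (h1 : X.numClasses 1 = Y.numClasses 1) :
    X.Isom Y := by
  refine isom_of_numClasses_eq fun κ => ?_
  by_cases hκ5 : κ = 5
  · rwa [hκ5]
  by_cases hκ1 : κ = 1
  · rwa [hκ1]
  have hX' (x : ℕ) : (X.classOf x).encard ≠ κ := by rcases hX x with h | h <;> rw [h] <;> grind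
  have hY' (y : ℕ) : (Y.classOf y).encard ≠ κ := by rcases hY y with h | h <;> rw [h] <;> grind
  rw [numClasses_eq_zero hX', numClasses_eq_zero hY']

/-- `S ≅ [5:n, 1:ω]` for some `n`. -/
def IsFiveOneCofinite (S : EqStruct) : Prop :=
  (∀ x, (S.classOf x).encard = 5 ∨ (S.classOf x).encard = 1) ∧ {x | S.classOf x ≠ {x}}.Finite

namespace IsFiveOneCofinite

lemma numClasses_one (hS : S.IsFiveOneCofinite) : S.numClasses 1 = ⊤ := by
  rw [numClasses, encard_eq_top_iff]
  refine ((hS.2.infinite_compl.image singleton_injective.injOn).mono ?_)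
  rintro _ ⟨x, hx, rfl⟩
  exact ⟨⟨x, (by simpa using hx : S.classOf x = {x}).symm⟩, encard_singleton x⟩

lemma numClasses_five_ne_top (hS : S.IsFiveOneCofinite) : S.numClasses 5 ≠ ⊤ := by
  refine ((hS.2.image S.classOf).subset ?_).encard_lt_top.ne
  rintro _ ⟨⟨x, rfl⟩, hx⟩
  refine ⟨x, fun h => ?_, rfl⟩
  rw [h, encard_singleton] at hx
  exact absurd hx (by decide)

theorem isom (hS : S.IsFiveOneCofinite) {n : ℕ} (hY : Y.IsFiveOneOmega n)
    (hn : S.numClasses 5 = n) : S.Isom Y :=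
  isom_of_numClasses_five_one hS.1 hY.1 (hn.trans hY.2.1.symm)
    (hS.numClasses_one.trans hY.2.2.symm)

theorem exists_isom {A : ℕ → EqStruct} (hA : ∀ n, (A n).IsFiveOneOmega n)
    (hS : S.IsFiveOneCofinite) : ∃ n, S.Isom (A n) :=
  ⟨_, hS.isom (hA _) (ENat.natCast_toNat hS.numClasses_five_ne_top).symm⟩

end IsFiveOneCofinite

def discrete : EqStruct := ⟨Eq, eq_equivalence⟩

lemma classOf_discrete (x : ℕ) : discrete.classOf x = {x} :=
  Set.ext fun _ => eq_comm

lemma isFiveOneCofinite_discrete : discrete.IsFiveOneCofinite :=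
  ⟨fun x => Or.inr (by rw [classOf_discrete, encard_singleton]), by simp [classOf_discrete]⟩

def collapse (S : EqStruct) (P : Set ℕ) : EqStruct where
  rel x y := (x ∈ P ∧ y ∈ P) ∨ (x ∉ P ∧ y ∉ P ∧ S.rel x y)
  equiv := by
    refine ⟨fun x => ?_, fun h => ?_, fun h h' => ?_⟩ <;>
      grind [S.equiv.refl, S.equiv.symm, S.equiv.trans]

lemma classOf_collapse_of_mem (hx : x ∈ P) : (S.collapse P).classOf x = P := by
  ext y
  simp [classOf, collapse, hx]

lemma classOf_collapse_of_notMem (hP : ∀ y ∈ P, S.classOf y = {y}) (hx : x ∉ P) :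
    (S.collapse P).classOf x = S.classOf x := by
  ext y
  refine ⟨fun h => ?_, fun h => Or.inr ⟨hx, fun hy => hx ?_, h⟩⟩
  · exact (by simpa [classOf, collapse, hx] using h : y ∉ P ∧ S.rel x y).2
  · have : x ∈ S.classOf y := S.equiv.symm h
    rw [hP y hy, mem_singleton_iff] at this
    rwa [this]

theorem IsFiveOneCofinite.exists_extension (hS : S.IsFiveOneCofinite) (k t : ℕ) :
    ∃ S' : EqStruct, S'.IsFiveOneCofinite ∧ (∀ x < t, ∀ y < t, S'.rel x y ↔ S.rel x y) ∧
      (S'.classOf k).encard = 5 := by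
  rcases hS.1 k with hk5 | hk1
  · exact ⟨S, hS, fun _ _ _ _ => Iff.rfl, hk5⟩
  have hk : S.classOf k = {k} := by
    obtain ⟨a, ha⟩ := encard_eq_one.mp hk1
    have hka := S.mem_classOf_self k
    rw [ha, mem_singleton_iff] at hka
    rw [ha, hka]
  -- Fresh singletons `≥ t` leave the relation below `t` unchanged.
  obtain ⟨Q, hQ, hQcard⟩ :=
    (hS.2.infinite_compl.sdiff (finite_Iio (max t (k + 1)))).exists_subset_card_eq 4
  set P : Set ℕ := insert k Q
  have hPsing : ∀ y ∈ P, S.classOf y = {y} := by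
    rintro y (rfl | hy)
    · exact hk
    · simpa using (hQ hy).1
  have hPlt : ∀ y ∈ P, y < t → y = k := by
    rintro y (rfl | hy) hyt
    · rfl
    · exact absurd (lt_max_of_lt_left hyt) (hQ hy).2
  have hP5 : P.encard = 5 := by
    have hkQ : k ∉ (Q : Set ℕ) := fun hkQ => (hQ hkQ).2 (lt_max_of_lt_right k.lt_succ_self)
    rw [encard_insert_of_notMem hkQ, encard_coe_eq_coe_finsetCard, hQcard]
    rfl
  refine ⟨S.collapse P, ⟨fun x => ?_, ?_⟩, fun x hx y hy => ?_, ?_⟩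
  · by_cases hxP : x ∈ P
    · exact Or.inl (by rw [classOf_collapse_of_mem hxP, hP5])
    · rw [classOf_collapse_of_notMem hPsing hxP]
      exact hS.1 x
  · refine (hS.2.union (Q.finite_toSet.insert k)).subset fun x hx => ?_
    by_cases hxP : x ∈ P
    · exact Or.inr hxP
    · exact Or.inl fun h => hx (by rwa [classOf_collapse_of_notMem hPsing hxP])
  · rw [← mem_classOf, ← mem_classOf]
    by_cases hxP : x ∈ P
    · obtain rfl := hPlt x hxP hx
      rw [classOf_collapse_of_mem hxP, hk]
      exact ⟨(hPlt y · hy), fun h => (mem_singleton_iff.mp h).symm ▸ hxP⟩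
    · rw [classOf_collapse_of_notMem hPsing hxP]
  · rw [classOf_collapse_of_mem (mem_insert k _), hP5]

end EqStruct

theorem exists_seq_of_forall_exists_step {α : Type*} {p : α → Prop} {r : ℕ → α → α → Prop}
    {a : α} (ha : p a) (h : ∀ n a, p a → ∃ b, p b ∧ r n a b) :
    ∃ f : ℕ → α, ∀ n, p (f n) ∧ r n (f n) (f (n + 1)) := by
  choose g hg using h
  let F : ℕ → {a // p a} := fun n =>
    Nat.rec ⟨a, ha⟩ (fun n b => ⟨g n b.1 b.2, (hg n b.1 b.2).1⟩) n
  exact ⟨fun n => (F n).1, fun n => ⟨(F n).2, (hg n _ _).2⟩⟩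

open Filter

namespace EqStruct

open Classical in
noncomputable def canonicalInformant (S : EqStruct) (n : ℕ) : (ℕ × ℕ) × Bool :=
  (n.unpair, decide (S.rel n.unpair.1 n.unpair.2))

lemma isInformant_canonicalInformant (S : EqStruct) : IsInformant S S.canonicalInformant :=
  ⟨fun p => ⟨Nat.pair p.1 p.2, by simp [canonicalInformant]⟩,
    fun n => by simp [canonicalInformant]⟩

lemma seg_canonicalInformant_congr {S T : EqStruct} {t : ℕ}
    (h : ∀ x < t, ∀ y < t, S.rel x y ↔ T.rel x y) :
    seg S.canonicalInformant t = seg T.canonicalInformant t := by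
  refine List.map_congr_left fun n hn => ?_
  replace hn := List.mem_range.mp hn
  simp only [canonicalInformant, Prod.mk.injEq, true_and, decide_eq_decide]
  exact h _ ((Nat.unpair_left_le n).trans_lt hn) _ ((Nat.unpair_right_le n).trans_lt hn)

def limit (S : ℕ → EqStruct) : EqStruct where
  rel x y := ∀ᶠ j in atTop, (S j).rel x y
  equiv :=
    ⟨fun x => .of_forall fun j => (S j).equiv.refl x, fun h => h.mono fun j => (S j).equiv.symm,
      fun h h' => (h.and h').mono fun j hj => (S j).equiv.trans hj.1 hj.2⟩

lemma limit_rel_iff {S : ℕ → EqStruct} {x y : ℕ} {p : Prop}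
    (h : ∀ᶠ j in atTop, ((S j).rel x y ↔ p)) : (limit S).rel x y ↔ p :=
  (eventually_congr h).trans eventually_const

end EqStruct

open EqStruct

structure Stage where
  S : EqStruct
  t : ℕ
  e : ℕ

def Stage.Next (Me : ℕ → EqStruct) (M : Learner) (k : ℕ) (s s' : Stage) : Prop :=
  s.t < s'.t ∧ (∀ x < s.t, ∀ y < s.t, s'.S.rel x y ↔ s.S.rel x y) ∧
    (s'.S.classOf k).encard = 5 ∧ s'.S.classOf k ⊆ Iio s'.t ∧
    M (seg s'.S.canonicalInformant s'.t) = some s'.e ∧ (Me s'.e).Isom s'.S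

theorem Stage.exists_next {Me : ℕ → EqStruct} {M : Learner} {A : ℕ → EqStruct}
    (hA : ∀ n, (A n).IsFiveOneOmega n) (hM : ∀ n, InfExLearns Me EqStruct.Isom M (A n))
    (k : ℕ) {s : Stage} (hs : s.S.IsFiveOneCofinite) :
    ∃ s' : Stage, s'.S.IsFiveOneCofinite ∧ s.Next Me M k s' := by
  obtain ⟨S', hS', hagree, hk⟩ := hs.exists_extension k s.t
  obtain ⟨n, hn⟩ := hS'.exists_isom hA
  obtain ⟨e, he, N, hN⟩ := hM n S' hn _ S'.isInformant_canonicalInformant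
  obtain ⟨b, hb⟩ := (finite_of_encard_eq_coe (k := 5) hk).bddAbove
  let t' := max N (max (s.t + 1) (b + 1))
  refine ⟨⟨S', t', e⟩, hS', show s.t < t' by omega, hagree, hk, fun y hy => ?_,
    hN t' (le_max_left _ _), he⟩
  have := hb hy
  simp only [mem_Iio]
  omega

def IsStageSequence (Me : ℕ → EqStruct) (M : Learner) (s : ℕ → Stage) : Prop :=
  ∀ n, (s n).S.IsFiveOneCofinite ∧ Stage.Next Me M n (s n) (s (n + 1))

namespace IsStageSequence

variable {Me : ℕ → EqStruct} {M : Learner} {s : ℕ → Stage} {j x y : ℕ}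

lemma strictMono_t (hs : IsStageSequence Me M s) : StrictMono fun n => (s n).t :=
  strictMono_nat_of_lt_succ fun n => (hs n).2.1

lemma rel_iff_of_le (hs : IsStageSequence Me M s) {j' : ℕ} (hjj' : j ≤ j') (hx : x < (s j).t)
    (hy : y < (s j).t) : (s j').S.rel x y ↔ (s j).S.rel x y := by
  induction j', hjj' using Nat.le_induction with
  | base => rfl
  | succ j' hj ih =>
    have hle := hs.strictMono_t.monotone hj
    exact ((hs j').2.2.1 x (hx.trans_le hle) y (hy.trans_le hle)).trans ih

lemma limit_rel_iff (hs : IsStageSequence Me M s) (hx : x < (s j).t) (hy : y < (s j).t) :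
    (limit fun n => (s n).S).rel x y ↔ (s j).S.rel x y :=
  EqStruct.limit_rel_iff <| (eventually_ge_atTop j).mono fun _ hj' => hs.rel_iff_of_le hj' hx hy

lemma classOf_eq (hs : IsStageSequence Me M s) (hj : x < j) :
    (s j).S.classOf x = (s (x + 1)).S.classOf x := by
  obtain ⟨-, -, h5, hsub, -⟩ := (hs x).2
  -- Later stages keep this `5`-class by agreement below `(s (x + 1)).t`, and no class is larger.
  symm
  refine (finite_of_encard_eq_coe (k := 5) h5).eq_of_subset_of_encard_le (fun y hy => ?_) ?_
  · exact (hs.rel_iff_of_le hj (hsub (mem_classOf_self _ x)) (hsub hy)).mpr hy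
  · rw [h5]
    rcases (hs j).1.1 x with h | h <;> simp [h]

lemma encard_classOf_limit (hs : IsStageSequence Me M s) (x : ℕ) :
    ((limit fun n => (s n).S).classOf x).encard = 5 := by
  have : (limit fun n => (s n).S).classOf x = (s (x + 1)).S.classOf x :=
    Set.ext fun y => EqStruct.limit_rel_iff <| (eventually_gt_atTop x).mono fun j hj => by
      rw [← mem_classOf, hs.classOf_eq hj, mem_classOf]
  rw [this]
  exact (hs x).2.2.2.1

lemma seg_limit (hs : IsStageSequence Me M s) (j : ℕ) :
    seg (limit fun n => (s n).S).canonicalInformant (s j).t =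
      seg (s j).S.canonicalInformant (s j).t :=
  seg_canonicalInformant_congr fun _ hx _ hy => hs.limit_rel_iff hx hy

end IsStageSequence

/-- the family `{[5:n, 1:ω] : n ∈ ω} ∪ {[5:ω]}` is not InfEx-learnable up
to isomorphism. -/
theorem stmt19 (Me : ℕ → EqStruct) (A : ℕ → EqStruct) (B : EqStruct)
    (hA : ∀ n : ℕ,
      (∀ x, ((A n).classOf x).encard = 5 ∨ ((A n).classOf x).encard = 1) ∧
      (A n).numClasses 5 = (n : ℕ∞) ∧ (A n).numClasses 1 = ⊤)
    (hB : ∀ x, (B.classOf x).encard = 5) :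
    ¬ ∃ M : Learner, (∀ n, InfExLearns Me EqStruct.Isom M (A n)) ∧
      InfExLearns Me EqStruct.Isom M B := by
  rintro ⟨M, hMA, hMB⟩
  obtain ⟨s, hs⟩ : ∃ s, IsStageSequence Me M s :=
    exists_seq_of_forall_exists_step (r := Stage.Next Me M) (a := ⟨discrete, 0, 0⟩)
      isFiveOneCofinite_discrete fun k _ => Stage.exists_next hA hMA k
  set L := limit fun n => (s n).S
  have hLB : L.Isom B := isom_of_forall_encard_classOf_eq (by decide) hs.encard_classOf_limit hB
  obtain ⟨e, hLe, N, hN⟩ := hMB L hLB _ L.isInformant_canonicalInformant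
  obtain ⟨-, -, -, -, hguess, hSe⟩ := (hs N).2
  have hNt : N ≤ (s (N + 1)).t := N.le_succ.trans (hs.strictMono_t.id_le (N + 1))
  rw [← hs.seg_limit, hN _ hNt, Option.some_inj] at hguess
  subst hguess
  have h1 := hLe.numClasses_eq 1
  rw [hSe.numClasses_eq 1, (hs (N + 1)).1.numClasses_one,
    numClasses_eq_zero fun x => by rw [hs.encard_classOf_limit x]; decide] at h1
  exact ENat.top_ne_zero h1
end
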